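/- arXiv:1405.7063 — 2 statements merged into one kernel-verified Lean document; each statement's English description precedes it below -/
import Mathlib

section
/- Let H be a Hilbert space, let F₁, …, F_N be continuous linear functionals on H and let f ∈ H. Suppose s ∈ H satisfies F_ν(s) = F_ν(f) for all ν = 1, …, N and ‖s‖ ≤ ‖h‖ for every h ∈ H with F_ν(h) = F_ν(f) for all ν (i.e. s is the minimal-norm interpolant). Let K ≥ ‖s‖ and let Q = { h ∈ H : F_ν(h) = F_ν(f) for all ν, and ‖h‖ ≤ K }. Then for every h ∈ Q one has 2s − h ∈ Q, and consequently ‖s − h‖ ≤ (1/2)·diam Q, where diam Q = sup{‖h₁ − h₂‖ : h₁, h₂ ∈ Q}. -/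
/-!
Every interpolant is `s - v` with `v` in the common kernel `V` of the `F ν`, and `s` is the point
of `s - V` closest to the origin, so `s ⟂ V`. Hence the reflection `h ↦ 2s - h = s + v` keeps the
data and, by Pythagoras, the norm: `Q` is symmetric about `s`, and `2‖s - h‖` is the distance
between the two points `h, 2s - h` of `Q`.
-/

open Metric Bornology

theorem Submodule.inner_eq_zero_of_forall_norm_le_norm_sub {𝕜 E : Type*} [RCLike 𝕜]
    [NormedAddCommGroup E] [InnerProductSpace 𝕜 E] {V : Submodule 𝕜 E} {s : E}
    (hmin : ∀ w ∈ V, ‖s‖ ≤ ‖s - w‖) : ∀ w ∈ V, inner 𝕜 s w = 0 := by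
  have hinf : ‖s - 0‖ = ⨅ w : V, ‖s - w‖ := by
    refine le_antisymm (le_ciInf fun w => by simpa using hmin w w.2) ?_
    simpa using ciInf_le (f := fun w : V => ‖s - w‖)
      ⟨0, by rintro _ ⟨w, rfl⟩; exact norm_nonneg _⟩ 0
  simpa using (V.norm_eq_iInf_iff_inner_eq_zero V.zero_mem).1 hinf

theorem norm_sub_le_half_diam_of_two_smul_sub_mem {𝕜 E : Type*} [RCLike 𝕜]
    [SeminormedAddCommGroup E] [NormedSpace 𝕜 E] {S : Set E} (hS : IsBounded S) {c x : E}
    (hx : x ∈ S) (hx' : (2 : 𝕜) • c - x ∈ S) : ‖c - x‖ ≤ 1 / 2 * diam S := by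
  have hdist := dist_le_diam_of_mem hS hx' hx
  rw [dist_eq_norm, show (2 : 𝕜) • c - x - x = (2 : 𝕜) • (c - x) by rw [smul_sub, two_smul 𝕜 x,
    sub_sub], norm_smul, RCLike.norm_two] at hdist
  linarith

theorem spline_symmetry_center_general
    {𝕜 : Type*} [RCLike 𝕜] {H : Type*} [NormedAddCommGroup H]
    [InnerProductSpace 𝕜 H]
    (N : ℕ) (F : Fin N → (H →L[𝕜] 𝕜)) (f s : H)
    (hs_interp : ∀ ν, F ν s = F ν f)
    (hs_min : ∀ h : H, (∀ ν, F ν h = F ν f) → ‖s‖ ≤ ‖h‖)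
    (K : ℝ) :
    ∀ h : H, (∀ ν, F ν h = F ν f) → ‖h‖ ≤ K →
      (∀ ν, F ν ((2 : 𝕜) • s - h) = F ν f) ∧ ‖(2 : 𝕜) • s - h‖ ≤ K ∧
      ‖s - h‖ ≤ (1 / 2) *
        Metric.diam {h' : H | (∀ ν, F ν h' = F ν f) ∧ ‖h'‖ ≤ K} := by
  intro h hh hhK
  let V : Submodule 𝕜 H := ⨅ ν, (F ν).ker
  have h_orth : inner 𝕜 (s - h) s = 0 := by
    refine inner_eq_zero_symm.1 <| Submodule.inner_eq_zero_of_forall_norm_le_norm_sub (V := V)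
      (fun w hw => hs_min _ fun ν => ?_) (s - h) ?_
    · simp_all [V, Submodule.mem_iInf]
    · simp [V, Submodule.mem_iInf, hs_interp, hh]
  have h_refl_interp : ∀ ν, F ν ((2 : 𝕜) • s - h) = F ν f := fun ν => by
    simp [two_smul, hs_interp ν, hh ν]
  have h_refl_norm : ‖(2 : 𝕜) • s - h‖ = ‖h‖ := by
    rw [two_smul, add_sub_assoc, ← norm_sub_eq_norm_add h_orth, sub_sub_cancel]
  have hQ : IsBounded {h' : H | (∀ ν, F ν h' = F ν f) ∧ ‖h'‖ ≤ K} :=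
    (isBounded_closedBall (x := 0) (r := K)).subset fun x hx => by simpa using hx.2
  exact ⟨h_refl_interp, h_refl_norm ▸ hhK, norm_sub_le_half_diam_of_two_smul_sub_mem hQ ⟨hh, hhK⟩
    ⟨h_refl_interp, h_refl_norm ▸ hhK⟩⟩

/-- The minimal-norm interpolant s is the symmetry center of the convex bounded set Q
of all interpolants of norm at most K: for every h ∈ Q one has 2s − h ∈ Q and hence
‖s − h‖ ≤ (1/2)·diam Q. -/
theorem spline_symmetry_center
    {𝕜 : Type*} [RCLike 𝕜] {H : Type*} [NormedAddCommGroup H]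
    [InnerProductSpace 𝕜 H] [CompleteSpace H]
    (N : ℕ) (F : Fin N → (H →L[𝕜] 𝕜)) (f s : H)
    (hs_interp : ∀ ν, F ν s = F ν f)
    (hs_min : ∀ h : H, (∀ ν, F ν h = F ν f) → ‖s‖ ≤ ‖h‖)
    (K : ℝ) (hK : ‖s‖ ≤ K) :
    ∀ h : H, (∀ ν, F ν h = F ν f) → ‖h‖ ≤ K →
      (∀ ν, F ν ((2 : 𝕜) • s - h) = F ν f) ∧ ‖(2 : 𝕜) • s - h‖ ≤ K ∧
      ‖s - h‖ ≤ (1 / 2) *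
        Metric.diam {h' : H | (∀ ν, F ν h' = F ν f) ∧ ‖h'‖ ≤ K} :=
  spline_symmetry_center_general N F f s hs_interp hs_min K
end

section
/- Let w : ℕ → ℝ satisfy w_j ≥ 1 for all j, and let H be the Hilbert space of sequences c : ℕ → ℂ with Σ_j w_j |c_j|² < ∞, with inner product ⟨c, d⟩_w = Σ_j w_j c_j \overline{d_j}. For ν = 1, …, N let a_ν : ℕ → ℂ satisfy Σ_j w_j^{-1} |a_ν(j)|² < ∞, and define the continuous linear functional F_ν(c) = Σ_j c_j \overline{a_ν(j)} on H (the series converges absolutely by Cauchy–Schwarz). Let v ∈ ℂ^N, set β_{μν} = Σ_j w_j^{-1} a_ν(j) \overline{a_μ(j)}, and suppose α ∈ ℂ^N solves Σ_{ν=1}^N β_{μν} α_ν = v_μ for μ = 1, …, N. Define s by s_j = w_j^{-1} Σ_{ν=1}^N α_ν a_ν(j). Then s ∈ H, F_μ(s) = v_μ for all μ, and s is the unique minimizer of Σ_j w_j |c_j|² among all c ∈ H with F_ν(c) = v_ν for all ν. -/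
/-!
Write `H` for the weighted ℓ²-space and `F_ν(c) = ∑ c_j conj (a_ν j)`. Since
`w_j s_j = ∑ α_ν a_ν(j)`, the weighted inner product `⟨c, s⟩_w` equals `∑ conj α_ν F_ν(c)` for
every `c ∈ H`, and the Gram system says precisely `F_μ(s) = v_μ`. Any other interpolant `c`
differs from `s` by some `d` annihilated by every `F_ν`, hence `w`-orthogonal to `s`, and
Pythagoras gives `‖c‖² = ‖s‖² + ‖d‖²`.
-/

open ComplexConjugate Finset

variable {ι κ : Type*}

theorem two_mul_mul_le_mul_sq_add_inv_mul_sq {W : ℝ} (hW : 0 < W) (X Y : ℝ) :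
    2 * (X * Y) ≤ W * X ^ 2 + W⁻¹ * Y ^ 2 := by
  have h : 0 ≤ W⁻¹ * (W * X - Y) ^ 2 := by positivity
  have h' : W⁻¹ * (W * X - Y) ^ 2 = W * X ^ 2 - 2 * (X * Y) + W⁻¹ * Y ^ 2 := by
    field_simp
    ring
  linarith

def weightedL2 (w : ι → ℝ) (hw : 0 ≤ w) : Submodule ℂ (ι → ℂ) where
  carrier := {c | Summable fun j => w j * ‖c j‖ ^ 2}
  add_mem' {c d} hc hd := by
    refine .of_nonneg_of_le (fun j => mul_nonneg (hw j) (sq_nonneg _)) (fun j => ?_)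
      ((hc.add hd).mul_left 2)
    calc w j * ‖c j + d j‖ ^ 2 ≤ w j * (2 * (‖c j‖ ^ 2 + ‖d j‖ ^ 2)) := by
          gcongr
          · exact hw j
          · exact (pow_le_pow_left₀ (norm_nonneg _) (norm_add_le _ _) 2).trans add_sq_le
      _ = 2 * (w j * ‖c j‖ ^ 2 + w j * ‖d j‖ ^ 2) := by ring
  zero_mem' := by simp
  smul_mem' z c hc := by
    simpa [norm_mul, mul_pow, mul_left_comm] using hc.mul_left (‖z‖ ^ 2)

@[simp]
theorem mem_weightedL2 {w : ι → ℝ} {hw : 0 ≤ w} {c : ι → ℂ} :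
    c ∈ weightedL2 w hw ↔ Summable fun j => w j * ‖c j‖ ^ 2 :=
  Iff.rfl

theorem tsum_weighted_norm_sq_eq_add {w : ι → ℝ} {hw : 0 ≤ w} {s c : ι → ℂ}
    (hs : s ∈ weightedL2 w hw) (hc : c ∈ weightedL2 w hw)
    (horth : HasSum (fun j => (w j : ℂ) * ((c j - s j) * conj (s j))) 0) :
    ∑' j, w j * ‖c j‖ ^ 2 = ∑' j, w j * ‖s j‖ ^ 2 + ∑' j, w j * ‖c j - s j‖ ^ 2 := by
  refine HasSum.tsum_eq ?_
  convert ((mem_weightedL2.1 hs).hasSum.add (mem_weightedL2.1 (sub_mem hc hs)).hasSum).add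
    ((horth.mapL Complex.reCLM).mul_left 2) using 1
  · funext j
    have hre : ((c j - s j) * conj (s j)).re = (s j * conj (c j - s j)).re := by
      rw [← Complex.conj_re, map_mul, Complex.conj_conj, mul_comm]
    have hnorm := Complex.normSq_add (s j) (c j - s j)
    rw [add_sub_cancel] at hnorm
    simp only [Complex.sq_norm, hnorm, Pi.sub_apply, Complex.reCLM_apply,
      Complex.re_ofReal_mul, hre]
    ring
  · simp

noncomputable def spline (w : ι → ℝ) (t : Finset κ) (α : κ → ℂ) (a : κ → ι → ℂ) : ι → ℂ :=
  fun j => (w j : ℂ)⁻¹ * ∑ ν ∈ t, α ν * a ν j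

theorem hasSum_weighted_mul_conj_spline_eq_zero {w : ι → ℝ} (hw : ∀ j, w j ≠ 0)
    {a : κ → ι → ℂ} {t : Finset κ} (α : κ → ℂ) {d : ι → ℂ}
    (hd : ∀ ν ∈ t, HasSum (fun j => d j * conj (a ν j)) 0) :
    HasSum (fun j => (w j : ℂ) * (d j * conj (spline w t α a j))) 0 := by
  have hpt : ∀ j, (w j : ℂ) * (d j * conj (spline w t α a j))
      = ∑ ν ∈ t, conj (α ν) * (d j * conj (a ν j)) := fun j => by
    have hwj : (w j : ℂ) ≠ 0 := Complex.ofReal_ne_zero.2 (hw j)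
    simp only [spline, map_mul, map_inv₀, Complex.conj_ofReal, map_sum, Finset.mul_sum]
    refine Finset.sum_congr rfl fun ν _ => ?_
    field_simp
  simpa [hpt] using hasSum_sum fun ν hν => (hd ν hν).mul_left (conj (α ν))

section Positive

variable {w : ι → ℝ} (hw : ∀ j, 0 < w j)

theorem summable_mul_conj_of_mem_weightedL2 {c b : ι → ℂ}
    (hc : c ∈ weightedL2 w fun j => (hw j).le)
    (hb : b ∈ weightedL2 w⁻¹ fun j => (inv_pos.2 (hw j)).le) :
    Summable fun j => c j * conj (b j) := by
  refine .of_norm (.of_nonneg_of_le (fun j => norm_nonneg _) (fun j => ?_) (hc.add hb))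
  have := two_mul_mul_le_mul_sq_add_inv_mul_sq (hw j) ‖c j‖ ‖b j‖
  have := mul_nonneg (norm_nonneg (c j)) (norm_nonneg (b j))
  simp only [norm_mul, RCLike.norm_conj, Pi.inv_apply]
  linarith

theorem inv_mul_mem_weightedL2 {g : ι → ℂ}
    (hg : g ∈ weightedL2 w⁻¹ fun j => (inv_pos.2 (hw j)).le) :
    (fun j => (w j : ℂ)⁻¹ * g j) ∈ weightedL2 w fun j => (hw j).le := by
  refine (mem_weightedL2.1 hg).congr fun j => ?_
  rw [norm_mul, norm_inv, Complex.norm_real, Real.norm_of_nonneg (hw j).le, Pi.inv_apply]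
  field_simp [(hw j).ne']

theorem eq_zero_of_tsum_weighted_norm_sq_eq_zero {d : ι → ℂ}
    (hd : d ∈ weightedL2 w fun j => (hw j).le) (h : ∑' j, w j * ‖d j‖ ^ 2 = 0) : d = 0 := by
  have hzero := (hasSum_zero_iff_of_nonneg fun j => mul_nonneg (hw j).le (sq_nonneg ‖d j‖)).1
    (h ▸ (mem_weightedL2.1 hd).hasSum)
  funext j
  simpa [(hw j).ne'] using congrFun hzero j

variable {a : κ → ι → ℂ} {t : Finset κ}

theorem spline_mem_weightedL2 (α : κ → ℂ)
    (ha : ∀ ν ∈ t, a ν ∈ weightedL2 w⁻¹ fun j => (inv_pos.2 (hw j)).le) :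
    spline w t α a ∈ weightedL2 w fun j => (hw j).le := by
  refine inv_mul_mem_weightedL2 hw ?_
  convert Submodule.sum_mem _ fun ν hν => Submodule.smul_mem _ (α ν) (ha ν hν) using 1
  funext j
  simp

theorem tsum_spline_mul_conj (α : κ → ℂ)
    (ha : ∀ ν ∈ t, a ν ∈ weightedL2 w⁻¹ fun j => (inv_pos.2 (hw j)).le) {b : ι → ℂ}
    (hb : b ∈ weightedL2 w⁻¹ fun j => (inv_pos.2 (hw j)).le) :
    ∑' j, spline w t α a j * conj (b j)
      = ∑ ν ∈ t, (∑' j, (w j : ℂ)⁻¹ * (a ν j * conj (b j))) * α ν := by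
  have hsum : ∀ ν ∈ t, Summable fun j => (w j : ℂ)⁻¹ * (a ν j * conj (b j)) := fun ν hν => by
    simpa only [mul_assoc] using summable_mul_conj_of_mem_weightedL2 hw
      (inv_mul_mem_weightedL2 hw (ha ν hν)) hb
  calc ∑' j, spline w t α a j * conj (b j)
      = ∑' j, ∑ ν ∈ t, (w j : ℂ)⁻¹ * (a ν j * conj (b j)) * α ν := tsum_congr fun j => by
        simp only [spline, Finset.mul_sum, Finset.sum_mul]
        exact Finset.sum_congr rfl fun ν _ => by ring
    _ = ∑ ν ∈ t, ∑' j, (w j : ℂ)⁻¹ * (a ν j * conj (b j)) * α ν :=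
        Summable.tsum_finsetSum fun ν hν => (hsum ν hν).mul_right (α ν)
    _ = _ := Finset.sum_congr rfl fun ν hν => (hsum ν hν).tsum_mul_right (α ν)

end Positive

/-- Sequence-space form of the main theorem on generalized variational splines:
in the weighted ℓ²-space with weights w_j ≥ 1, the sequence
s_j = w_j^{-1} Σ_ν α_ν a_ν(j), where α solves the linear system with Gram matrix
β_{μν} = Σ_j w_j^{-1} a_ν(j) conj(a_μ(j)), belongs to the space, satisfies the
interpolation constraints F_μ(s) = v_μ, and is the unique minimizer of the weighted
norm among all interpolants. -/
theorem variational_spline_sequence_space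
    (w : ℕ → ℝ) (hw : ∀ j, 1 ≤ w j)
    (N : ℕ) (a : Fin N → ℕ → ℂ)
    (ha : ∀ ν, Summable fun j => (w j)⁻¹ * ‖a ν j‖ ^ 2)
    (v : Fin N → ℂ) (α : Fin N → ℂ)
    (hα : ∀ μ : Fin N,
      ∑ ν : Fin N, (∑' j : ℕ, ((w j : ℂ)⁻¹ * (a ν j * (starRingEnd ℂ) (a μ j)))) * α ν
        = v μ)
    (s : ℕ → ℂ) (hs : ∀ j, s j = (w j : ℂ)⁻¹ * ∑ ν : Fin N, α ν * a ν j) :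
    (Summable fun j => w j * ‖s j‖ ^ 2) ∧
    (∀ μ : Fin N, ∑' j : ℕ, s j * (starRingEnd ℂ) (a μ j) = v μ) ∧
    (∀ c : ℕ → ℂ, (Summable fun j => w j * ‖c j‖ ^ 2) →
      (∀ ν : Fin N, ∑' j : ℕ, c j * (starRingEnd ℂ) (a ν j) = v ν) →
      (∑' j : ℕ, w j * ‖s j‖ ^ 2 ≤ ∑' j : ℕ, w j * ‖c j‖ ^ 2) ∧
      ((∑' j : ℕ, w j * ‖c j‖ ^ 2) = (∑' j : ℕ, w j * ‖s j‖ ^ 2) → c = s)) := by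
  have hw₀ : ∀ j, 0 < w j := fun j => one_pos.trans_le (hw j)
  obtain rfl : s = spline w univ α a := funext hs
  set s := spline w univ α a
  have hsH : s ∈ weightedL2 w fun j => (hw₀ j).le := spline_mem_weightedL2 hw₀ α fun ν _ => ha ν
  have hsF : ∀ μ, ∑' j, s j * conj (a μ j) = v μ := fun μ => by
    rw [tsum_spline_mul_conj hw₀ α (fun ν _ => ha ν) (ha μ), hα μ]
  refine ⟨hsH, hsF, fun c hc hcF => ?_⟩
  have hdF : ∀ ν ∈ univ, HasSum (fun j => (c - s) j * conj (a ν j)) 0 := fun ν _ => by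
    have := (summable_mul_conj_of_mem_weightedL2 hw₀ hc (ha ν)).hasSum.sub
      (summable_mul_conj_of_mem_weightedL2 hw₀ hsH (ha ν)).hasSum
    rw [hcF ν, hsF ν, sub_self] at this
    simpa only [Pi.sub_apply, sub_mul] using this
  have hpyth := tsum_weighted_norm_sq_eq_add hsH hc
    (hasSum_weighted_mul_conj_spline_eq_zero (fun j => (hw₀ j).ne') α hdF)
  have hd_nonneg : 0 ≤ ∑' j, w j * ‖c j - s j‖ ^ 2 :=
    tsum_nonneg fun j => mul_nonneg (hw₀ j).le (sq_nonneg _)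
  refine ⟨by linarith, fun heq => sub_eq_zero.1 ?_⟩
  refine eq_zero_of_tsum_weighted_norm_sq_eq_zero hw₀ (sub_mem hc hsH) ?_
  show ∑' j, w j * ‖c j - s j‖ ^ 2 = 0
  linarith
end
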